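/- arXiv:1608.06851 — 4 statements merged into one kernel-verified Lean document; each statement's English description precedes it below -/
import Mathlib

section
/- Let (Ω, F, (Fₙ), P) be a filtered probability space and for each n let P̄ₙ and P̄*ₙ be probability measures on Fₙ with densities f̄ₙ and f̄*ₙ respectively with respect to a common σ-finite measure ν̄ₙ, where P̄*ₙ = P restricted to Fₙ. Let F̃ₙ ⊆ Fₙ be sub-σ-fields and let f̃ₙ, f̃*ₙ be the densities of the F̃ₙ-restrictions of P̄ₙ and P̄*ₙ with respect to the F̃ₙ-restriction of ν̄ₙ. Then P-almost surely, n⁻¹ log(f̃ₙ/f̃*ₙ) ≥ n⁻¹ log(f̄ₙ/f̄*ₙ) + εₙ where εₙ → 0 P-a.s. In particular, P-almost surely, the event { f̄ₙ/f̄*ₙ > n² · f̃ₙ/f̃*ₙ } occurs for only finitely many n. -/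
/-!
With `Zₙ = (f̄ₙ / f̄*ₙ) · (f̃*ₙ / f̃ₙ)`, integrating against `P = f̄*ₙ · ν̄ₙ` on `Fₙ` turns `E[Zₙ]`
into the `P̄ₙ`-integral of the `F̃ₙ`-measurable function `f̃*ₙ / f̃ₙ`, hence into
`∫ f̃ₙ · (f̃*ₙ / f̃ₙ) dν̄ₙ ≤ ∫ f̃*ₙ dν̄ₙ = 1` (on `F̃ₙ`). Markov's inequality gives
`P(Zₙ ≥ n²) ≤ n⁻²`, so by Borel–Cantelli `Zₙ < n²` eventually, which gives
`f̄ₙ / f̄*ₙ ≤ n² · f̃ₙ / f̃*ₙ` since `f̃*ₙ` is a.s. positive and finite. Taking logarithms,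
`εₙ = -2 log n / n` works for all large `n`, and the a.s. finiteness of `Zₙ` leaves a finite gap
to absorb for the remaining `n`.
-/

open MeasureTheory Filter
open scoped ENNReal

namespace ENNReal

lemma le_mul_div_of_mul_div_le {x a b c : ℝ≥0∞} (hc₀ : c ≠ 0) (hc : c ≠ ∞) (hb₀ : b ≠ 0)
    (hb : b ≠ ∞) (h : x * (b / a) ≤ c) : x ≤ c * (a / b) := by
  rw [← ENNReal.inv_div (a := b) (b := a) (.inr hb) (.inr hb₀), ← div_eq_mul_inv]
  exact (ENNReal.le_div_iff_mul_le (.inr hc₀) (.inr hc)).2 h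

lemma tsum_inv_succ_sq_ne_top : ∑' n : ℕ, (((n + 1 : ℕ) : ℝ≥0∞) ^ 2)⁻¹ ≠ ∞ := by
  have hs : Summable (fun n : ℕ ↦ (((n + 1 : ℕ) : ℝ) ^ 2)⁻¹) :=
    (summable_nat_add_iff 1).2 (Real.summable_nat_pow_inv.2 (by norm_num))
  convert ENNReal.ofReal_ne_top (r := ∑' n : ℕ, (((n + 1 : ℕ) : ℝ) ^ 2)⁻¹) using 1
  rw [ENNReal.ofReal_tsum_of_nonneg (fun n ↦ by positivity) hs]
  congr 1 with n
  rw [ENNReal.ofReal_inv_of_pos (by positivity), ENNReal.ofReal_pow (by positivity),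
    ENNReal.ofReal_natCast]

end ENNReal

noncomputable def logRatioError (n : ℕ) (x y : ℝ≥0∞) : ℝ :=
  if x ≤ (n : ℝ≥0∞) ^ 2 * y then -(2 * Real.log n) / n
  else (Real.log y.toReal - Real.log x.toReal) / n

lemma coe_inv_mul_log {n : ℕ} {x : ℝ≥0∞} (hx₀ : x ≠ 0) (hx : x ≠ ∞) :
    (((n : ℝ)⁻¹ : ℝ) : EReal) * ENNReal.log x = ((Real.log x.toReal / n : ℝ) : EReal) := by
  rw [ENNReal.log_pos_real hx₀ hx, ← EReal.coe_mul, inv_mul_eq_div]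

lemma inv_mul_log_add_logRatioError_le {n : ℕ} (hn : n ≠ 0) {x y c : ℝ≥0∞} (hc : c ≠ ∞)
    (hxy : x ≤ c * y) :
    (((n : ℝ)⁻¹ : ℝ) : EReal) * ENNReal.log x + logRatioError n x y
      ≤ (((n : ℝ)⁻¹ : ℝ) : EReal) * ENNReal.log y := by
  have hn' : (0 : ℝ) < (n : ℝ)⁻¹ := by positivity
  rcases eq_or_ne x 0 with rfl | hx₀
  · rw [ENNReal.log_zero, EReal.mul_bot_of_pos (EReal.coe_pos.2 hn'), EReal.bot_add]
    exact bot_le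
  rcases eq_or_ne y ∞ with rfl | hy
  · rw [ENNReal.log_top, EReal.mul_top_of_pos (EReal.coe_pos.2 hn')]
    exact le_top
  have hx : x ≠ ∞ := ne_top_of_le_ne_top (ENNReal.mul_ne_top hc hy) hxy
  have hy₀ : y ≠ 0 := by
    rintro rfl
    exact hx₀ (nonpos_iff_eq_zero.1 (hxy.trans_eq (mul_zero c)))
  rw [coe_inv_mul_log hx₀ hx, coe_inv_mul_log hy₀ hy, ← EReal.coe_add, EReal.coe_le_coe_iff]
  unfold logRatioError
  split_ifs with hsq
  · have hpos : 0 < x.toReal := ENNReal.toReal_pos hx₀ hx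
    have hle : x.toReal ≤ (n : ℝ) ^ 2 * y.toReal := by
      simpa using ENNReal.toReal_mono (ENNReal.mul_ne_top (by simp) hy) hsq
    have hlog : Real.log x.toReal ≤ 2 * Real.log n + Real.log y.toReal := by
      calc Real.log x.toReal ≤ Real.log ((n : ℝ) ^ 2 * y.toReal) := Real.log_le_log hpos hle
        _ = 2 * Real.log n + Real.log y.toReal := by
          rw [Real.log_mul (by positivity) (ENNReal.toReal_pos hy₀ hy).ne', Real.log_pow]
          push_cast; ring
    rw [← add_div, div_le_div_iff_of_pos_right (by positivity)]
    linarith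
  · exact le_of_eq (by ring)

lemma tendsto_logRatioError {x y : ℕ → ℝ≥0∞}
    (h : ∀ᶠ n in atTop, x n ≤ (n : ℝ≥0∞) ^ 2 * y n) :
    Tendsto (fun n ↦ logRatioError n (x n) (y n)) atTop (nhds 0) := by
  have hlog : Tendsto (fun n : ℕ ↦ -(2 * Real.log n) / n) atTop (nhds 0) := by
    have := (Real.isLittleO_log_id_atTop.tendsto_div_nhds_zero.comp
      tendsto_natCast_atTop_atTop).const_mul (-2)
    rw [mul_zero] at this
    refine this.congr fun n ↦ ?_
    simp only [Function.comp, id]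
    ring
  refine hlog.congr' ?_
  filter_upwards [h] with n hn
  rw [logRatioError, if_pos hn]

section

variable {Ω : Type*} {mΩ : MeasurableSpace Ω} {P : Measure Ω}

lemma ae_eventually_lt_sq_of_lintegral_le [IsFiniteMeasure P] {Z : ℕ → Ω → ℝ≥0∞} {c : ℝ≥0∞}
    (hc : c ≠ ∞) (hZ : ∀ n, AEMeasurable (Z n) P) (hint : ∀ n, ∫⁻ ω, Z n ω ∂P ≤ c) :
    ∀ᵐ ω ∂P, ∀ᶠ n in atTop, Z n ω < (n : ℝ≥0∞) ^ 2 := by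
  set B : ℕ → Set Ω := fun n ↦ {ω | (n : ℝ≥0∞) ^ 2 ≤ Z n ω}
  have hmarkov (n : ℕ) : P (B (n + 1)) ≤ c * (((n + 1 : ℕ) : ℝ≥0∞) ^ 2)⁻¹ :=
    calc P (B (n + 1)) ≤ (∫⁻ ω, Z (n + 1) ω ∂P) / ((n + 1 : ℕ) : ℝ≥0∞) ^ 2 :=
          meas_ge_le_lintegral_div (hZ _) (by positivity) (by simp)
      _ ≤ c * (((n + 1 : ℕ) : ℝ≥0∞) ^ 2)⁻¹ := ENNReal.div_le_div_right (hint _) _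
  have htail : ∑' n, P (B (n + 1)) ≠ ∞ := by
    refine ne_top_of_le_ne_top ?_ (ENNReal.tsum_le_tsum hmarkov)
    rw [ENNReal.tsum_mul_left]
    exact ENNReal.mul_ne_top hc ENNReal.tsum_inv_succ_sq_ne_top
  have hsum : ∑' n, P (B n) ≠ ∞ := fun htop ↦
    htail (ENNReal.tsum_add_one_eq_top htop (measure_ne_top P _))
  filter_upwards [ae_eventually_notMem hsum] with ω hω
  filter_upwards [hω] with n hn
  simpa [B] using hn

lemma ae_ne_zero_ne_top_of_trim_eq_withDensity [IsFiniteMeasure P] {m : MeasurableSpace Ω}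
    (hm : m ≤ mΩ) {μ : Measure[m] Ω} {g : Ω → ℝ≥0∞} (hg : Measurable[m] g)
    (h : P.trim hm = μ.withDensity g) : ∀ᵐ ω ∂P, g ω ≠ 0 ∧ g ω ≠ ∞ := by
  refine ae_of_ae_trim hm ?_
  have hfin : ∫⁻ ω, g ω ∂μ ≠ ∞ := by
    rw [← setLIntegral_univ, ← withDensity_apply _ MeasurableSet.univ, ← h]
    exact measure_ne_top _ _
  rw [h]
  filter_upwards [(ae_withDensity_iff hg).2 (ae_of_all _ fun _ h ↦ h),
    withDensity_absolutelyContinuous μ g (ae_lt_top hg hfin)] with ω h₀ htop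
  exact ⟨h₀, htop.ne⟩

lemma lintegral_div_mul_div_le_measure_univ {m m' : MeasurableSpace Ω} (hm : m ≤ m') (hm' : m' ≤ mΩ)
    {ν : Measure[m'] Ω} {f f' g g' : Ω → ℝ≥0∞}
    (hf : Measurable[m'] f) (hf' : Measurable[m'] f') (hg : Measurable[m] g)
    (hg' : Measurable[m] g') (hP : P.trim hm' = ν.withDensity f')
    (hfg : (ν.withDensity f).trim hm = (ν.trim hm).withDensity g)
    (hfg' : (ν.withDensity f').trim hm = (ν.trim hm).withDensity g') :
    ∫⁻ ω, f ω / f' ω * (g' ω / g ω) ∂P ≤ P Set.univ := by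
  have hh : Measurable[m] fun ω ↦ g' ω / g ω := hg'.div hg
  have hh' : Measurable[m'] fun ω ↦ g' ω / g ω := hh.mono hm le_rfl
  have hZ : Measurable[m'] fun ω ↦ f ω / f' ω * (g' ω / g ω) := (hf.div hf').mul hh'
  calc ∫⁻ ω, f ω / f' ω * (g' ω / g ω) ∂P
      = ∫⁻ ω, f ω / f' ω * (g' ω / g ω) ∂(ν.withDensity f') := by
        rw [← hP, lintegral_trim hm' hZ]
    _ = ∫⁻ ω, f' ω * (f ω / f' ω * (g' ω / g ω)) ∂ν :=
        lintegral_withDensity_eq_lintegral_mul _ hf' hZ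
    _ ≤ ∫⁻ ω, f ω * (g' ω / g ω) ∂ν := lintegral_mono fun ω ↦ by
        rw [← mul_assoc]
        exact mul_le_mul_left ENNReal.mul_div_le _
    _ = ∫⁻ ω, g' ω / g ω ∂(ν.withDensity f) :=
        (lintegral_withDensity_eq_lintegral_mul _ hf hh').symm
    _ = ∫⁻ ω, g' ω / g ω ∂((ν.trim hm).withDensity g) := by
        rw [← hfg, lintegral_trim hm hh]
    _ = ∫⁻ ω, g ω * (g' ω / g ω) ∂(ν.trim hm) :=
        lintegral_withDensity_eq_lintegral_mul _ hg hh
    _ ≤ ∫⁻ ω, g' ω ∂(ν.trim hm) := lintegral_mono fun ω ↦ ENNReal.mul_div_le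
    _ = P Set.univ := by
        rw [← setLIntegral_univ, ← withDensity_apply _ MeasurableSet.univ, ← hfg',
          trim_measurableSet_eq hm MeasurableSet.univ,
          ← trim_measurableSet_eq hm' MeasurableSet.univ, hP]

end

theorem image_density_lemma_general {Ω : Type*} {mΩ : MeasurableSpace Ω}
    (P : Measure Ω) [IsProbabilityMeasure P]
    (F Ft : ℕ → MeasurableSpace Ω) (hF : ∀ n, F n ≤ mΩ) (hFt : ∀ n, Ft n ≤ F n)
    (ν : (n : ℕ) → @Measure Ω (F n))
    (fb fbs ftl ftls : ℕ → Ω → ℝ≥0∞)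
    (hfb : ∀ n, Measurable[F n] (fb n)) (hfbs : ∀ n, Measurable[F n] (fbs n))
    (hftl : ∀ n, Measurable[Ft n] (ftl n)) (hftls : ∀ n, Measurable[Ft n] (ftls n))
    (hPstar : ∀ n, P.trim (hF n) = (ν n).withDensity (fbs n))
    (hrt : ∀ n, ((ν n).withDensity (fb n)).trim (hFt n) = ((ν n).trim (hFt n)).withDensity (ftl n))
    (hrts : ∀ n, ((ν n).withDensity (fbs n)).trim (hFt n)
      = ((ν n).trim (hFt n)).withDensity (ftls n)) :
    (∃ ε : ℕ → Ω → ℝ,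
      (∀ᵐ ω ∂P, Tendsto (fun n => ε n ω) atTop (nhds 0)) ∧
      (∀ᵐ ω ∂P, ∀ n : ℕ, 1 ≤ n →
        (((n : ℝ)⁻¹ : ℝ) : EReal) * ENNReal.log (fb n ω / fbs n ω) + (ε n ω : EReal)
          ≤ (((n : ℝ)⁻¹ : ℝ) : EReal) * ENNReal.log (ftl n ω / ftls n ω))) ∧
    (∀ᵐ ω ∂P, ∀ᶠ n : ℕ in atTop,
      fb n ω / fbs n ω ≤ (n : ℝ≥0∞) ^ 2 * (ftl n ω / ftls n ω)) := by
  have hint (n : ℕ) : ∫⁻ ω, fb n ω / fbs n ω * (ftls n ω / ftl n ω) ∂P ≤ 1 :=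
    (lintegral_div_mul_div_le_measure_univ (hFt n) (hF n) (hfb n) (hfbs n) (hftl n) (hftls n)
      (hPstar n) (hrt n) (hrts n)).trans_eq measure_univ
  have hmeas (n : ℕ) : AEMeasurable (fun ω ↦ fb n ω / fbs n ω * (ftls n ω / ftl n ω)) P :=
    ((((hfb n).div (hfbs n)).mul (((hftls n).div (hftl n)).mono (hFt n) le_rfl)).mono
      (hF n) le_rfl).aemeasurable
  have hftls_pos : ∀ᵐ ω ∂P, ∀ n, ftls n ω ≠ 0 ∧ ftls n ω ≠ ∞ := ae_all_iff.2 fun n ↦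
    ae_ne_zero_ne_top_of_trim_eq_withDensity ((hFt n).trans (hF n)) (hftls n)
      (by rw [← trim_trim (hm₁₂ := hFt n) (hm₂ := hF n), hPstar n, hrts n])
  have hfin : ∀ᵐ ω ∂P, ∀ n, fb n ω / fbs n ω * (ftls n ω / ftl n ω) ≠ ∞ :=
    ae_all_iff.2 fun n ↦
      (ae_lt_top' (hmeas n) ((hint n).trans_lt ENNReal.one_lt_top).ne).mono fun _ h ↦ h.ne
  have hsq : ∀ᵐ ω ∂P, ∀ᶠ n : ℕ in atTop,
      fb n ω / fbs n ω ≤ (n : ℝ≥0∞) ^ 2 * (ftl n ω / ftls n ω) := by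
    filter_upwards [hftls_pos,
      ae_eventually_lt_sq_of_lintegral_le ENNReal.one_ne_top hmeas hint] with ω hω hlt
    filter_upwards [hlt, eventually_ne_atTop 0] with n hn hn₀
    exact ENNReal.le_mul_div_of_mul_div_le (by simpa using hn₀) (by simp) (hω n).1 (hω n).2 hn.le
  refine ⟨⟨fun n ω ↦ logRatioError n (fb n ω / fbs n ω) (ftl n ω / ftls n ω), ?_, ?_⟩, hsq⟩
  · filter_upwards [hsq] with ω hω using tendsto_logRatioError hω
  · filter_upwards [hftls_pos, hfin] with ω hω hZ n hn
    have hc := ENNReal.add_ne_top.2 ⟨hZ n, ENNReal.one_ne_top⟩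
    exact inv_mul_log_add_logRatioError_le (by omega) hc
      (ENNReal.le_mul_div_of_mul_div_le (by simp) hc (hω n).1 (hω n).2 le_self_add)

/-- In a filtered probability space `(Ω, F, (Fₙ), P)`, let `P̄ₙ = ν̄ₙ.withDensity f̄ₙ`
be probability measures and `f̄*ₙ` the density of `P` restricted to `Fₙ` w.r.t. the σ-finite measure
`ν̄ₙ` on `Fₙ`; let `F̃ₙ ⊆ Fₙ` be sub-σ-fields and `f̃ₙ, f̃*ₙ` the densities of the `F̃ₙ`-restrictions.
Then `P`-a.s., `n⁻¹ log(f̃ₙ/f̃*ₙ) ≥ n⁻¹ log(f̄ₙ/f̄*ₙ) + εₙ` with `εₙ → 0` `P`-a.s.; in particular,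
`P`-a.s. the event `{ f̄ₙ/f̄*ₙ > n² · f̃ₙ/f̃*ₙ }` occurs for only finitely many `n`. -/
theorem image_density_lemma {Ω : Type*} {mΩ : MeasurableSpace Ω}
    (P : Measure Ω) [IsProbabilityMeasure P]
    (F Ft : ℕ → MeasurableSpace Ω) (hFmono : Monotone F)
    (hF : ∀ n, F n ≤ mΩ) (hFt : ∀ n, Ft n ≤ F n)
    (ν : (n : ℕ) → @Measure Ω (F n)) (hν : ∀ n, SigmaFinite (ν n))
    (fb fbs ftl ftls : ℕ → Ω → ℝ≥0∞)
    (hfb : ∀ n, Measurable[F n] (fb n)) (hfbs : ∀ n, Measurable[F n] (fbs n))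
    (hftl : ∀ n, Measurable[Ft n] (ftl n)) (hftls : ∀ n, Measurable[Ft n] (ftls n))
    (hprob : ∀ n, IsProbabilityMeasure ((ν n).withDensity (fb n)))
    (hPstar : ∀ n, P.trim (hF n) = (ν n).withDensity (fbs n))
    (hrt : ∀ n, ((ν n).withDensity (fb n)).trim (hFt n) = ((ν n).trim (hFt n)).withDensity (ftl n))
    (hrts : ∀ n, ((ν n).withDensity (fbs n)).trim (hFt n)
      = ((ν n).trim (hFt n)).withDensity (ftls n)) :
    (∃ ε : ℕ → Ω → ℝ,
      (∀ᵐ ω ∂P, Tendsto (fun n => ε n ω) atTop (nhds 0)) ∧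
      (∀ᵐ ω ∂P, ∀ n : ℕ, 1 ≤ n →
        (((n : ℝ)⁻¹ : ℝ) : EReal) * ENNReal.log (fb n ω / fbs n ω) + (ε n ω : EReal)
          ≤ (((n : ℝ)⁻¹ : ℝ) : EReal) * ENNReal.log (ftl n ω / ftls n ω))) ∧
    (∀ᵐ ω ∂P, ∀ᶠ n : ℕ in atTop,
      fb n ω / fbs n ω ≤ (n : ℝ≥0∞) ^ 2 * (ftl n ω / ftls n ω)) :=
  image_density_lemma_general P F Ft hF hFt ν fb fbs ftl ftls hfb hfbs hftl hftls hPstar hrt hrts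
end

section
/- Let λ be a non-zero σ-finite measure on a measurable space (Θ, T) and for each n let (g_{θ,n})_{θ∈Θ} and g*ₙ be nonnegative jointly measurable random variables on a probability space (Ω, F, P) with g*ₙ > 0 P-a.s. Assume that for every δ > 0 there exists a set Θ_δ ∈ T with λ(Θ_δ) > 0 such that for every θ ∈ Θ_δ, liminf_n n⁻¹ log(g_{θ,n}/g*ₙ) ≥ −δ P-a.s. Then for every ε > 0, P( ∫ λ(dθ) g_{θ,n}/g*ₙ ≤ e^{−εn} infinitely often ) = 0. -/
/-!
Take `Θ_{ε/2}` from information denseness. For each `θ` in it, `e^{εn} g_{θ,n}/g*ₙ → ∞`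
`P`-a.s., since `g_{θ,n}/g*ₙ` eventually exceeds `e^{-cn}` for any `c ∈ (ε/2, ε)`. Joint
measurability lets Fubini swap the quantifiers: `P`-a.s., this divergence holds for `λ`-a.e.
`θ ∈ Θ_{ε/2}`, and Fatou's lemma over this set of positive `λ`-measure gives
`e^{εn} ∫ λ(dθ) g_{θ,n}/g*ₙ → ∞`, in particular eventually `> 1`.
-/

open MeasureTheory Filter Topology
open scoped ENNReal

lemma ENNReal.ofReal_exp_mul_lt_of_lt_inv_mul_log {x : ℝ≥0∞} {a t : ℝ} (ht : 0 < t)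
    (h : (a : EReal) < ((t⁻¹ : ℝ) : EReal) * ENNReal.log x) :
    ENNReal.ofReal (Real.exp (a * t)) < x := by
  rw [mul_comm, EReal.coe_inv, ← div_eq_mul_inv,
    EReal.lt_div_iff (by exact_mod_cast ht) (EReal.coe_ne_top t), ← EReal.coe_mul] at h
  simpa only [EReal.exp_coe, ENNReal.exp_log] using EReal.exp_lt_exp_iff.2 h

lemma ENNReal.ofReal_exp_neg_lt_iff {x : ℝ≥0∞} {t : ℝ} :
    ENNReal.ofReal (Real.exp (-t)) < x ↔ 1 < ENNReal.ofReal (Real.exp t) * x := by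
  rw [Real.exp_neg, ENNReal.ofReal_inv_of_pos (Real.exp_pos t), ← one_div,
    ENNReal.div_lt_iff (by simp [Real.exp_pos]) (by simp), mul_comm]

lemma tendsto_ofReal_exp_mul_mul_nhds_top {r : ℕ → ℝ≥0∞} {δ ε : ℝ} (hδε : δ < ε)
    (h : ((-δ : ℝ) : EReal) ≤
      atTop.liminf fun n : ℕ => (((n : ℝ)⁻¹ : ℝ) : EReal) * ENNReal.log (r n)) :
    Tendsto (fun n : ℕ => ENNReal.ofReal (Real.exp (ε * n)) * r n) atTop (𝓝 ∞) := by
  obtain ⟨c, hδc, hcε⟩ := exists_between hδε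
  have h_eventually : ∀ᶠ n : ℕ in atTop,
      ((-c : ℝ) : EReal) < (((n : ℝ)⁻¹ : ℝ) : EReal) * ENNReal.log (r n) :=
    eventually_lt_of_lt_liminf <| lt_of_lt_of_le (by exact_mod_cast (by linarith : -c < -δ)) h
  have h_growth : Tendsto (fun n : ℕ => ENNReal.ofReal (Real.exp ((ε - c) * n))) atTop (𝓝 ∞) :=
    ENNReal.tendsto_ofReal_atTop.comp <| Real.tendsto_exp_atTop.comp <|
      tendsto_natCast_atTop_atTop.const_mul_atTop (by linarith)
  refine tendsto_nhds_top_mono h_growth ?_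
  filter_upwards [h_eventually, eventually_gt_atTop 0] with n hn hn0
  calc ENNReal.ofReal (Real.exp ((ε - c) * n))
      = ENNReal.ofReal (Real.exp (ε * n)) * ENNReal.ofReal (Real.exp (-c * n)) := by
        rw [← ENNReal.ofReal_mul (Real.exp_pos _).le, ← Real.exp_add]; ring_nf
    _ ≤ ENNReal.ofReal (Real.exp (ε * n)) * r n :=
        by gcongr; exact (ENNReal.ofReal_exp_mul_lt_of_lt_inv_mul_log
          (by exact_mod_cast hn0) hn).le

theorem tendsto_lintegral_nhds_top_of_ae_tendsto {α ι : Type*} {mα : MeasurableSpace α}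
    {μ : Measure α} (hμ : μ ≠ 0) {u : Filter ι} [u.IsCountablyGenerated] [u.NeBot]
    {F : ι → α → ℝ≥0∞} (hF : ∀ i, AEMeasurable (F i) μ)
    (h : ∀ᵐ x ∂μ, Tendsto (fun i => F i x) u (𝓝 ∞)) :
    Tendsto (fun i => ∫⁻ x, F i x ∂μ) u (𝓝 ∞) := by
  have h_liminf : u.liminf (fun i => ∫⁻ x, F i x ∂μ) = ∞ := by
    refine top_le_iff.1 ?_
    calc ∞ = ∫⁻ x, u.liminf (fun i => F i x) ∂μ := by
          rw [lintegral_congr_ae (h.mono fun x hx => hx.liminf_eq), lintegral_const,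
            ENNReal.top_mul (Measure.measure_univ_ne_zero.2 hμ)]
      _ ≤ _ := lintegral_liminf_le' hF
  exact tendsto_of_liminf_eq_limsup h_liminf (top_le_iff.1 (h_liminf ▸ liminf_le_limsup))

theorem merging_with_probability_one_general {Ω Θ : Type*} {mΩ : MeasurableSpace Ω}
    {mΘ : MeasurableSpace Θ}
    (P : Measure Ω) [IsProbabilityMeasure P]
    (lam : Measure Θ) [SigmaFinite lam]
    (g : Θ → ℕ → Ω → ℝ≥0∞) (gs : ℕ → Ω → ℝ≥0∞)
    (hg : ∀ n, Measurable fun p : Θ × Ω => g p.1 n p.2)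
    (hgs : ∀ n, Measurable (gs n))
    (hdense : ∀ δ : ℝ, 0 < δ → ∃ Θδ : Set Θ, MeasurableSet Θδ ∧ 0 < lam Θδ ∧
      ∀ θ ∈ Θδ, ∀ᵐ ω ∂P,
        ((-δ : ℝ) : EReal) ≤ Filter.atTop.liminf fun n : ℕ =>
          (((n : ℝ)⁻¹ : ℝ) : EReal) * ENNReal.log (g θ n ω / gs n ω)) :
    ∀ ε : ℝ, 0 < ε → ∀ᵐ ω ∂P, ∀ᶠ n : ℕ in atTop,
      ENNReal.ofReal (Real.exp (-ε * n)) < ∫⁻ θ, g θ n ω / gs n ω ∂lam := by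
  intro ε hε
  obtain ⟨S, hS_meas, hS_pos, hS⟩ := hdense (ε / 2) (half_pos hε)
  have h_ratio : ∀ n, Measurable fun p : Θ × Ω => g p.1 n p.2 / gs n p.2 := fun n =>
    (hg n).div ((hgs n).comp measurable_snd)
  set F : ℕ → Θ × Ω → ℝ≥0∞ := fun n p =>
    ENNReal.ofReal (Real.exp (ε * n)) * (g p.1 n p.2 / gs n p.2)
  have hF : ∀ n, Measurable (F n) := fun n => (h_ratio n).const_mul _
  have h_ae : ∀ᵐ ω ∂P, ∀ᵐ θ ∂lam.restrict S, Tendsto (fun n => F n (θ, ω)) atTop (𝓝 ∞) := by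
    refine (Measure.ae_ae_comm (measurableSet_tendsto _ hF)).1 ?_
    filter_upwards [ae_restrict_mem hS_meas] with θ hθ
    filter_upwards [hS θ hθ] with ω hω
    exact tendsto_ofReal_exp_mul_mul_nhds_top (half_lt_self hε) hω
  filter_upwards [h_ae] with ω hω
  have h_int := tendsto_lintegral_nhds_top_of_ae_tendsto
    (by simpa [Measure.restrict_apply_univ] using hS_pos.ne')
    (fun n => ((hF n).comp measurable_prodMk_right).aemeasurable) hω
  filter_upwards [h_int.eventually_const_lt ENNReal.one_lt_top] with n hn
  rw [neg_mul, ENNReal.ofReal_exp_neg_lt_iff]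
  calc 1 < ∫⁻ θ, F n (θ, ω) ∂lam.restrict S := hn
    _ = ENNReal.ofReal (Real.exp (ε * n)) * ∫⁻ θ, g θ n ω / gs n ω ∂lam.restrict S :=
        lintegral_const_mul _ ((h_ratio n).comp measurable_prodMk_right)
    _ ≤ _ := by gcongr; exact Measure.restrict_le_self

/-- (Merging with probability one of the prior-mixed likelihood.)
If the prior `λ` is information dense at the truth, in the sense that for every `δ > 0`
there is a set `Θ_δ` of positive `λ`-measure on which `liminf n⁻¹ log(g_{θ,n}/g*ₙ) ≥ −δ`
`P`-a.s., then for every `ε > 0`, `P`-a.s. eventually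
`∫ λ(dθ) g_{θ,n}/g*ₙ > e^{−εn}` (i.e. the event `{∫ λ(dθ) g_{θ,n}/g*ₙ ≤ e^{−εn}}`
occurs infinitely often with `P`-probability zero). -/
theorem merging_with_probability_one {Ω Θ : Type*} {mΩ : MeasurableSpace Ω}
    {mΘ : MeasurableSpace Θ}
    (P : Measure Ω) [IsProbabilityMeasure P]
    (lam : Measure Θ) [SigmaFinite lam] (hlam : lam ≠ 0)
    (g : Θ → ℕ → Ω → ℝ≥0∞) (gs : ℕ → Ω → ℝ≥0∞)
    (hg : ∀ n, Measurable fun p : Θ × Ω => g p.1 n p.2)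
    (hgs : ∀ n, Measurable (gs n))
    (hgspos : ∀ n, ∀ᵐ ω ∂P, 0 < gs n ω)
    (hdense : ∀ δ : ℝ, 0 < δ → ∃ Θδ : Set Θ, MeasurableSet Θδ ∧ 0 < lam Θδ ∧
      ∀ θ ∈ Θδ, ∀ᵐ ω ∂P,
        ((-δ : ℝ) : EReal) ≤ Filter.atTop.liminf fun n : ℕ =>
          (((n : ℝ)⁻¹ : ℝ) : EReal) * ENNReal.log (g θ n ω / gs n ω)) :
    ∀ ε : ℝ, 0 < ε → ∀ᵐ ω ∂P, ∀ᶠ n : ℕ in atTop,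
      ENNReal.ofReal (Real.exp (-ε * n)) < ∫⁻ θ, g θ n ω / gs n ω ∂lam :=
  merging_with_probability_one_general (mΩ := mΩ) (mΘ := mΘ) P lam g gs hg hgs hdense
end

section
/- Assume the information-denseness condition: for all δ > 0 there exists Θ_δ ∈ T with λ(Θ_δ) > 0 such that for all θ ∈ Θ_δ, liminf_n n⁻¹ log(g_{θ,n}/g*ₙ) ≥ −δ, P-a.s. Then for every approximately P-remote set A ∈ T, the posterior masses λₙ(A) = ∫_A λ(dθ) g_{θ,n} / ∫_Θ λ(dθ) g_{θ,n} converge to 0, P-almost surely. -/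
/-!
Write `Z_B(n) = ∫_B g_{θ,n} / g*ₙ dλ`, so that `λₙ(B) = Z_B(n) / Z_Θ(n)`. Information denseness
gives the denominator a nonnegative lower exponential growth rate almost surely: by Fubini the
quantifiers over `θ ∈ Θ_δ` and `ω` may be exchanged, and since `λ(Θ_δ) > 0` the integrand's
growth rate `≥ -δ` survives integration. A `P`-remote set has a numerator of negative upper
growth rate, so its posterior mass decays exponentially. An approximately remote `A` is covered
by `(A ∩ K_ε) ∪ K_εᶜ`, whence `limsup λₙ(A) ≤ ε`, simultaneously for the countably many
`ε = 1/(k+1)`.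
-/

open MeasureTheory Filter
open scoped ENNReal

/-- Posterior mass of a set `A ⊆ Θ` given the prior `lam` and likelihoods `g θ n ω`. -/
noncomputable def postMass {Ω Θ : Type*} [MeasurableSpace Ω] [MeasurableSpace Θ]
    (lam : Measure Θ) (g : Θ → ℕ → Ω → ℝ≥0∞) (n : ℕ) (A : Set Θ) (ω : Ω) : ℝ≥0∞ :=
  (∫⁻ θ in A, g θ n ω ∂lam) / ∫⁻ θ, g θ n ω ∂lam

/-- `A` is `P`-remote: the prior-mixed likelihood ratio over `A` decays exponentially. -/
def PRemote {Ω Θ : Type*} [MeasurableSpace Ω] [MeasurableSpace Θ]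
    (P : Measure Ω) (lam : Measure Θ) (g : Θ → ℕ → Ω → ℝ≥0∞) (gs : ℕ → Ω → ℝ≥0∞)
    (A : Set Θ) : Prop :=
  ∀ᵐ ω ∂P, Filter.atTop.limsup (fun n : ℕ =>
    (((n : ℝ)⁻¹ : ℝ) : EReal) * ENNReal.log (∫⁻ θ in A, g θ n ω / gs n ω ∂lam)) < 0

/-- `A` is approximately `P`-remote: for every `ε > 0` there is `K_ε` such that `A ∩ K_ε` is
`P`-remote and the posterior mass of `K_εᶜ` is asymptotically at most `ε`, `P`-a.s. -/
def ApproxPRemote {Ω Θ : Type*} [MeasurableSpace Ω] [MeasurableSpace Θ]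
    (P : Measure Ω) (lam : Measure Θ) (g : Θ → ℕ → Ω → ℝ≥0∞) (gs : ℕ → Ω → ℝ≥0∞)
    (A : Set Θ) : Prop :=
  ∀ ε : ℝ, 0 < ε → ∃ K : Set Θ, MeasurableSet K ∧ PRemote P lam g gs (A ∩ K) ∧
    ∀ᵐ ω ∂P, Filter.atTop.limsup (fun n => postMass lam g n Kᶜ ω) ≤ ENNReal.ofReal ε

open ExpGrowth Topology

namespace ExpGrowth

lemma inv_natCast_mul_eq_div (n : ℕ) (x : EReal) : (((n : ℝ)⁻¹ : ℝ) : EReal) * x = x / n := by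
  rw [div_eq_mul_inv, mul_comm]
  rfl

lemma liminf_inv_mul_log_eq_expGrowthInf (u : ℕ → ℝ≥0∞) :
    atTop.liminf (fun n : ℕ => (((n : ℝ)⁻¹ : ℝ) : EReal) * ENNReal.log (u n)) =
      expGrowthInf u := by
  simp only [inv_natCast_mul_eq_div, expGrowthInf]

lemma limsup_inv_mul_log_eq_expGrowthSup (u : ℕ → ℝ≥0∞) :
    atTop.limsup (fun n : ℕ => (((n : ℝ)⁻¹ : ℝ) : EReal) * ENNReal.log (u n)) =
      expGrowthSup u := by
  simp only [inv_natCast_mul_eq_div, expGrowthSup]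

lemma expGrowthSup_div_le {u v : ℕ → ℝ≥0∞} (hu : expGrowthSup u ≠ ⊤)
    (hv : expGrowthInf v ≠ ⊥) :
    expGrowthSup (fun n => u n / v n) ≤ expGrowthSup u - expGrowthInf v :=
  calc expGrowthSup (fun n => u n / v n) = expGrowthSup (u * v⁻¹) := rfl
    _ ≤ expGrowthSup u + expGrowthSup v⁻¹ :=
      expGrowthSup_mul_le (.inr (by rwa [expGrowthSup_inv, ne_eq, EReal.neg_eq_top_iff]))
        (.inl hu)
    _ = expGrowthSup u - expGrowthInf v := by rw [expGrowthSup_inv, sub_eq_add_neg]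

lemma tendsto_nhds_zero_of_expGrowthSup_neg {u : ℕ → ℝ≥0∞} (h : expGrowthSup u < 0) :
    Tendsto u atTop (𝓝 0) := by
  obtain ⟨c, hu, hc⟩ := EReal.lt_iff_exists_real_btwn.1 h
  have hpow : Tendsto (fun n : ℕ => EReal.exp c ^ n) atTop (𝓝 0) :=
    ENNReal.tendsto_pow_atTop_nhds_zero_of_lt_one (EReal.exp_lt_one_iff.2 hc)
  refine tendsto_of_tendsto_of_tendsto_of_le_of_le' tendsto_const_nhds hpow
    (.of_forall fun _ => zero_le) ?_
  filter_upwards [eventually_le_exp hu] with n hn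
  rwa [mul_comm, EReal.exp_nmul] at hn

lemma tendsto_div_nhds_zero_of_expGrowthSup_lt {u v : ℕ → ℝ≥0∞}
    (h : expGrowthSup u < expGrowthInf v) : Tendsto (fun n => u n / v n) atTop (𝓝 0) :=
  tendsto_nhds_zero_of_expGrowthSup_neg <| (expGrowthSup_div_le h.ne_top h.ne_bot).trans_lt <|
    (EReal.sub_neg (.inl h.ne_top) (.inr h.ne_bot)).2 h

lemma eventually_ne_zero_of_expGrowthInf_ne_bot {u : ℕ → ℝ≥0∞} (h : expGrowthInf u ≠ ⊥) :
    ∀ᶠ n in atTop, u n ≠ 0 := by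
  obtain ⟨c, -, hc⟩ := EReal.lt_iff_exists_real_btwn.1 (bot_lt_iff_ne_bot.2 h)
  filter_upwards [eventually_exp_le hc] with n hn
  have hpos : 0 < EReal.exp (c * n) := mod_cast ENNReal.ofReal_pos.2 (Real.exp_pos _)
  exact (hpos.trans_le hn).ne'

lemma _root_.Measurable.expGrowthInf {α : Type*} [MeasurableSpace α] {u : α → ℕ → ℝ≥0∞}
    (hu : ∀ n, Measurable fun x => u x n) : Measurable fun x => expGrowthInf (u x) :=
  .liminf fun n =>
    (EReal.monotone_div_right_of_nonneg n.cast_nonneg').measurable.comp (hu n).ennreal_log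

lemma le_expGrowthInf_lintegral {Θ : Type*} [MeasurableSpace Θ] {μ : Measure Θ} (hμ : μ ≠ 0)
    {F : ℕ → Θ → ℝ≥0∞} (hF : ∀ n, Measurable (F n)) {a : EReal}
    (h : ∀ᵐ θ ∂μ, a ≤ expGrowthInf fun n => F n θ) :
    a ≤ expGrowthInf fun n => ∫⁻ θ, F n θ ∂μ := by
  refine le_of_forall_lt_imp_le_of_dense fun b hb => ?_
  set E : ℕ → Set Θ := fun N => {θ | ∀ n ≥ N, EReal.exp (b * n) ≤ F n θ}
  have hE N : MeasurableSet (E N) := by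
    simp only [E, Set.ofPred_forall]
    exact .iInter fun n => .iInter fun _ => measurableSet_le measurable_const (hF n)
  obtain ⟨N, hN⟩ : ∃ N, μ (E N) ≠ 0 := by
    by_contra! h0
    have hcover : ∀ᵐ θ ∂μ, θ ∈ ⋃ N, E N := h.mono fun θ hθ =>
      Set.mem_iUnion.2 (eventually_atTop.1 (eventually_exp_le (hb.trans_le hθ)))
    have hnull : ∀ᵐ θ ∂μ, θ ∉ ⋃ N, E N :=
      measure_eq_zero_iff_ae_notMem.1 (measure_iUnion_null h0)
    exact hμ <| ae_eq_bot.1 <| eventually_false_iff_eq_bot.1 <|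
      (hcover.and hnull).mono fun _ h => h.2 h.1
  calc b = expGrowthInf fun n : ℕ => EReal.exp (b * n) := expGrowthInf_exp.symm
    _ ≤ expGrowthInf fun n => ∫⁻ θ, F n θ ∂μ := by
      refine expGrowthInf_of_eventually_ge hN (eventually_atTop.2 ⟨N, fun n hn => ?_⟩)
      calc μ (E N) * EReal.exp (b * n) = ∫⁻ _ in E N, EReal.exp (b * n) ∂μ := by
            rw [setLIntegral_const, mul_comm]
        _ ≤ ∫⁻ θ in E N, F n θ ∂μ := setLIntegral_mono' (hE N) fun θ hθ => hθ n hn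
        _ ≤ ∫⁻ θ, F n θ ∂μ := setLIntegral_le_lintegral _ _

end ExpGrowth

lemma ENNReal.tendsto_nhds_zero_of_forall_le_add {ι : Type*} {l : Filter ι} [l.NeBot]
    {u : ℕ → ℝ≥0∞} {v w : ι → ℕ → ℝ≥0∞} {ε : ι → ℝ≥0∞}
    (huvw : ∀ k n, u n ≤ v k n + w k n) (hv : ∀ k, Tendsto (v k) atTop (𝓝 0))
    (hw : ∀ k, atTop.limsup (w k) ≤ ε k) (hε : Tendsto ε l (𝓝 0)) :
    Tendsto u atTop (𝓝 0) := by
  have hlimsup k : atTop.limsup u ≤ ε k := calc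
    atTop.limsup u ≤ atTop.limsup (v k + w k) := limsup_le_limsup (.of_forall (huvw k))
    _ = atTop.limsup (w k) := limsup_add_of_left_tendsto_zero (hv k) _
    _ ≤ ε k := hw k
  exact tendsto_of_le_liminf_of_limsup_le zero_le (ge_of_tendsto' hε hlimsup)

def InformationDense {Ω Θ : Type*} [MeasurableSpace Ω] [MeasurableSpace Θ]
    (P : Measure Ω) (lam : Measure Θ) (g : Θ → ℕ → Ω → ℝ≥0∞) (gs : ℕ → Ω → ℝ≥0∞) : Prop :=
  ∀ δ : ℝ, 0 < δ → ∃ Θδ : Set Θ, MeasurableSet Θδ ∧ 0 < lam Θδ ∧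
    ∀ θ ∈ Θδ, ∀ᵐ ω ∂P,
      ((-δ : ℝ) : EReal) ≤ Filter.atTop.liminf fun n : ℕ =>
        (((n : ℝ)⁻¹ : ℝ) : EReal) * ENNReal.log (g θ n ω / gs n ω)

section Posterior

variable {Ω Θ : Type*} {mΩ : MeasurableSpace Ω} {mΘ : MeasurableSpace Θ}
  {P : Measure Ω} {lam : Measure Θ} {g : Θ → ℕ → Ω → ℝ≥0∞} {gs : ℕ → Ω → ℝ≥0∞}

lemma postMass_le_add_of_subset_union {A s t : Set Θ} (h : A ⊆ s ∪ t) (n : ℕ) (ω : Ω) :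
    postMass lam g n A ω ≤ postMass lam g n s ω + postMass lam g n t ω := by
  rw [postMass, postMass, postMass, ← ENNReal.add_div]
  exact ENNReal.div_le_div_right ((lintegral_mono_set h).trans (lintegral_union_le _ _ _)) _

lemma postMass_eq_div {r : ℝ≥0∞} (h0 : r ≠ 0) (htop : r ≠ ⊤) (A : Set Θ) (n : ℕ) (ω : Ω) :
    postMass lam g n A ω = (∫⁻ θ in A, g θ n ω / r ∂lam) / ∫⁻ θ, g θ n ω / r ∂lam := by
  simp only [div_eq_mul_inv (g _ n ω), lintegral_mul_const' _ _ (ENNReal.inv_ne_top.2 h0)]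
  rw [ENNReal.mul_div_mul_right _ _ (ENNReal.inv_ne_zero.2 htop) (ENNReal.inv_ne_top.2 h0)]
  rfl

lemma InformationDense.ae_expGrowthInf_lintegral_nonneg [SFinite P] [SFinite lam]
    (hdense : InformationDense P lam g gs) (hg : ∀ n, Measurable fun p : Θ × Ω => g p.1 n p.2)
    (hgs : ∀ n, Measurable (gs n)) :
    ∀ᵐ ω ∂P, 0 ≤ expGrowthInf fun n => ∫⁻ θ, g θ n ω / gs n ω ∂lam := by
  have hmeas : Measurable fun p : Θ × Ω => expGrowthInf fun n => g p.1 n p.2 / gs n p.2 :=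
    Measurable.expGrowthInf fun n => (hg n).div ((hgs n).comp measurable_snd)
  have hk (k : ℕ) : ∀ᵐ ω ∂P, ((-(1 / ((k : ℝ) + 1)) : ℝ) : EReal) ≤
      expGrowthInf fun n => ∫⁻ θ, g θ n ω / gs n ω ∂lam := by
    obtain ⟨T, hTm, hTpos, hT⟩ := hdense (1 / ((k : ℝ) + 1)) (by positivity)
    have hswap : ∀ᵐ ω ∂P, ∀ᵐ θ ∂lam.restrict T, ((-(1 / ((k : ℝ) + 1)) : ℝ) : EReal) ≤
        expGrowthInf fun n => g θ n ω / gs n ω := by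
      refine (Measure.ae_ae_comm ?_).1 ?_
      · exact measurableSet_le measurable_const hmeas
      · refine (ae_restrict_iff' hTm).2 (.of_forall fun θ hθ => ?_)
        simpa only [liminf_inv_mul_log_eq_expGrowthInf] using hT θ hθ
    have hT0 : lam.restrict T ≠ 0 := fun h0 => hTpos.ne' (Measure.restrict_eq_zero.1 h0)
    filter_upwards [hswap] with ω hω
    exact (le_expGrowthInf_lintegral hT0
      (fun n => ((hg n).comp measurable_prodMk_right).div_const _) hω).trans
      (expGrowthInf_monotone fun n => lintegral_mono' Measure.restrict_le_self le_rfl)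
  have hlim : Tendsto (fun k : ℕ => ((-(1 / ((k : ℝ) + 1)) : ℝ) : EReal)) atTop (𝓝 0) := by
    simpa using EReal.tendsto_coe.2 (tendsto_one_div_add_atTop_nhds_zero_nat (𝕜 := ℝ)).neg
  filter_upwards [ae_all_iff.2 hk] with ω hω
  exact le_of_tendsto' hlim hω

lemma PRemote.ae_tendsto_postMass_zero {B : Set Θ} (hB : PRemote P lam g gs B)
    (hgspos : ∀ n, ∀ᵐ ω ∂P, 0 < gs n ω)
    (hden : ∀ᵐ ω ∂P, 0 ≤ expGrowthInf fun n => ∫⁻ θ, g θ n ω / gs n ω ∂lam) :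
    ∀ᵐ ω ∂P, Tendsto (fun n => postMass lam g n B ω) atTop (𝓝 0) := by
  filter_upwards [hB, hden, ae_all_iff.2 hgspos] with ω hBω hdenω hgsω
  rw [limsup_inv_mul_log_eq_expGrowthSup] at hBω
  refine (tendsto_div_nhds_zero_of_expGrowthSup_lt (hBω.trans_le hdenω)).congr' ?_
  have hden_ne_bot := (EReal.bot_lt_zero.trans_le hdenω).ne'
  filter_upwards [eventually_ne_zero_of_expGrowthInf_ne_bot hden_ne_bot] with n hn
  -- `gs n ω = ⊤` would make the denominator `∫ g / ⊤` vanish.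
  refine (postMass_eq_div (hgsω n).ne' (fun htop => hn ?_) B n ω).symm
  simp [htop]

end Posterior

theorem posterior_mass_tendsto_zero_general {Ω Θ : Type*} {mΩ : MeasurableSpace Ω}
    {mΘ : MeasurableSpace Θ}
    (P : Measure Ω) [IsProbabilityMeasure P]
    (lam : Measure Θ) [SigmaFinite lam]
    (g : Θ → ℕ → Ω → ℝ≥0∞) (gs : ℕ → Ω → ℝ≥0∞)
    (hg : ∀ n, Measurable fun p : Θ × Ω => g p.1 n p.2)
    (hgs : ∀ n, Measurable (gs n))
    (hgspos : ∀ n, ∀ᵐ ω ∂P, 0 < gs n ω)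
    (hdense : ∀ δ : ℝ, 0 < δ → ∃ Θδ : Set Θ, MeasurableSet Θδ ∧ 0 < lam Θδ ∧
      ∀ θ ∈ Θδ, ∀ᵐ ω ∂P,
        ((-δ : ℝ) : EReal) ≤ Filter.atTop.liminf fun n : ℕ =>
          (((n : ℝ)⁻¹ : ℝ) : EReal) * ENNReal.log (g θ n ω / gs n ω))
    (A : Set Θ)
    (hAR : ApproxPRemote P lam g gs A) :
    ∀ᵐ ω ∂P, Tendsto (fun n => postMass lam g n A ω) atTop (nhds 0) := by
  have hden := InformationDense.ae_expGrowthInf_lintegral_nonneg hdense hg hgs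
  choose K _ hKrem hKc using fun k : ℕ => hAR (1 / ((k : ℝ) + 1)) (by positivity)
  have hrem k := (hKrem k).ae_tendsto_postMass_zero hgspos hden
  have hε : Tendsto (fun k : ℕ => ENNReal.ofReal (1 / ((k : ℝ) + 1))) atTop (𝓝 0) := by
    simpa using ENNReal.tendsto_ofReal (tendsto_one_div_add_atTop_nhds_zero_nat (𝕜 := ℝ))
  have hcover k : A ⊆ (A ∩ K k) ∪ (K k)ᶜ :=
    (Set.inter_union_compl A (K k)).symm.subset.trans
      (Set.union_subset_union_right _ Set.inter_subset_right)
  filter_upwards [ae_all_iff.2 hrem, ae_all_iff.2 hKc] with ω hremω hKcω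
  exact ENNReal.tendsto_nhds_zero_of_forall_le_add
    (fun k n => postMass_le_add_of_subset_union (hcover k) n ω) hremω hKcω hε

/-- Under the information-denseness condition, the posterior mass of any
approximately `P`-remote set converges to `0`, `P`-almost surely. -/
theorem posterior_mass_tendsto_zero {Ω Θ : Type*} {mΩ : MeasurableSpace Ω}
    {mΘ : MeasurableSpace Θ}
    (P : Measure Ω) [IsProbabilityMeasure P]
    (lam : Measure Θ) [SigmaFinite lam] (hlam : lam ≠ 0)
    (g : Θ → ℕ → Ω → ℝ≥0∞) (gs : ℕ → Ω → ℝ≥0∞)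
    (hg : ∀ n, Measurable fun p : Θ × Ω => g p.1 n p.2)
    (hgs : ∀ n, Measurable (gs n))
    (hgspos : ∀ n, ∀ᵐ ω ∂P, 0 < gs n ω)
    (hdense : ∀ δ : ℝ, 0 < δ → ∃ Θδ : Set Θ, MeasurableSet Θδ ∧ 0 < lam Θδ ∧
      ∀ θ ∈ Θδ, ∀ᵐ ω ∂P,
        ((-δ : ℝ) : EReal) ≤ Filter.atTop.liminf fun n : ℕ =>
          (((n : ℝ)⁻¹ : ℝ) : EReal) * ENNReal.log (g θ n ω / gs n ω))
    (A : Set Θ) (hA : MeasurableSet A)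
    (hAR : ApproxPRemote P lam g gs A) :
    ∀ᵐ ω ∂P, Tendsto (fun n => postMass lam g n A ω) atTop (nhds 0) :=
  posterior_mass_tendsto_zero_general (mΩ := mΩ) (mΘ := mΘ) P lam g gs hg hgs hgspos hdense A hAR
end

section
/- Under the setup of the AMLE equivalence, if additionally λ(K) < ∞ and either assertion holds, then for every closed set A not containing θ*, the set A ∩ K is P-remote: limsup_n n⁻¹ log ∫_{A∩K} λ(dθ) g_{θ,n}/g*ₙ < 0, P-a.s. -/
open MeasureTheory Filter
open scoped ENNReal

/-! Bounding the integrand on `A ∩ K` by its supremum gives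
`log ∫_{A∩K} g_θ/g* dλ ≤ sup_{A∩K} log (g_θ/g*) + log λ(A ∩ K)`. After scaling by `n⁻¹`, the
last term has limsup at most `0` because `λ(A ∩ K) ≤ λ(K) < ∞` (it is `⊥` when `λ(A ∩ K) = 0`),
so the limsup is bounded by that of the uniform rate, which is negative by assertion (ii). -/

lemma EReal.gc_coe_mul {c : ℝ} (hc : 0 < c) :
    GaloisConnection ((c : EReal) * ·) (((c⁻¹ : ℝ) : EReal) * ·) := by
  have cancel {a b : ℝ} (hab : a * b = 1) (x : EReal) : (a : EReal) * ((b : EReal) * x) = x := by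
    rw [← mul_assoc, ← EReal.coe_mul, hab, EReal.coe_one, one_mul]
  intro x y
  constructor
  · intro h
    calc x = ((c⁻¹ : ℝ) : EReal) * ((c : EReal) * x) := (cancel (inv_mul_cancel₀ hc.ne') x).symm
      _ ≤ ((c⁻¹ : ℝ) : EReal) * y :=
        mul_le_mul_of_nonneg_left h (EReal.coe_nonneg.2 (inv_pos.2 hc).le)
  · intro h
    calc (c : EReal) * x ≤ (c : EReal) * (((c⁻¹ : ℝ) : EReal) * y) :=
          mul_le_mul_of_nonneg_left h (EReal.coe_nonneg.2 hc.le)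
      _ = y := cancel (mul_inv_cancel₀ hc.ne') y

lemma EReal.limsup_inv_mul_le_zero {x : EReal} (hx : x ≠ ⊤) :
    limsup (fun n : ℕ => (((n : ℝ)⁻¹ : ℝ) : EReal) * x) atTop ≤ 0 := by
  have hlim : Tendsto (fun n : ℕ => (((n : ℝ)⁻¹ * x.toReal : ℝ) : EReal)) atTop (nhds 0) := by
    simpa using EReal.tendsto_coe.2 (tendsto_inv_atTop_nhds_zero_nat.mul_const x.toReal)
  refine (limsup_le_limsup (Eventually.of_forall fun n => ?_)).trans hlim.limsup_eq.le
  rw [EReal.coe_mul]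
  exact mul_le_mul_of_nonneg_left (EReal.le_coe_toReal hx) (EReal.coe_nonneg.2 (by positivity))

lemma ENNReal.log_setLIntegral_le {α : Type*} [MeasurableSpace α] (μ : Measure α) (s : Set α)
    (f : α → ℝ≥0∞) :
    log (∫⁻ x in s, f x ∂μ) ≤ (⨆ x ∈ s, log (f x)) + log (μ s) := by
  have hint : ∫⁻ x in s, f x ∂μ ≤ (⨆ x ∈ s, f x) * μ s :=
    (setLIntegral_mono measurable_const fun x hx => le_biSup f hx).trans_eq
      (setLIntegral_const _ _)
  calc log (∫⁻ x in s, f x ∂μ) ≤ log ((⨆ x ∈ s, f x) * μ s) := log_monotone hint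
    _ = (⨆ x ∈ s, log (f x)) + log (μ s) := by
      rw [log_mul_add, ← logOrderIso_apply, logOrderIso.map_iSup₂]
      rfl

lemma ENNReal.coe_mul_log_setLIntegral_le {α : Type*} [MeasurableSpace α] {c : ℝ} (hc : 0 < c)
    (μ : Measure α) (s : Set α) (f : α → ℝ≥0∞) :
    (c : EReal) * log (∫⁻ x in s, f x ∂μ) ≤
      (⨆ x ∈ s, (c : EReal) * log (f x)) + (c : EReal) * log (μ s) := by
  calc (c : EReal) * log (∫⁻ x in s, f x ∂μ)
      ≤ (c : EReal) * ((⨆ x ∈ s, log (f x)) + log (μ s)) :=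
        mul_le_mul_of_nonneg_left (log_setLIntegral_le μ s f) (EReal.coe_nonneg.2 hc.le)
    _ = (⨆ x ∈ s, (c : EReal) * log (f x)) + (c : EReal) * log (μ s) := by
      rw [EReal.left_distrib_of_nonneg_of_ne_top (EReal.coe_nonneg.2 hc.le) (EReal.coe_ne_top c),
        (EReal.gc_coe_mul hc).l_iSup₂]

theorem amle_implies_premote_general {Ω Θ : Type*} {mΩ : MeasurableSpace Ω}
    [MetricSpace Θ] [MeasurableSpace Θ]
    (P : Measure Ω)
    (lam : Measure Θ)
    (g : Θ → ℕ → Ω → ℝ≥0∞) (gs : ℕ → Ω → ℝ≥0∞)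
    (K : Set Θ) (θs : Θ)
    (hKfin : lam K < ⊤)
    (hii : ∀ A : Set Θ, IsClosed A → θs ∉ A →
      ∀ᵐ ω ∂P, Filter.atTop.limsup (fun n : ℕ =>
        ⨆ θ ∈ A ∩ K,
          (((n : ℝ)⁻¹ : ℝ) : EReal) * ENNReal.log (g θ n ω / gs n ω)) < 0) :
    ∀ A : Set Θ, IsClosed A → θs ∉ A →
      ∀ᵐ ω ∂P, Filter.atTop.limsup (fun n : ℕ =>
        (((n : ℝ)⁻¹ : ℝ) : EReal) *
          ENNReal.log (∫⁻ θ in A ∩ K, g θ n ω / gs n ω ∂lam)) < 0 := by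
  intro A hA hAs
  have hlog_ne_top : ENNReal.log (lam (A ∩ K)) ≠ ⊤ := by
    simpa using ((measure_mono Set.inter_subset_right).trans_lt hKfin).ne
  have hvol := EReal.limsup_inv_mul_le_zero hlog_ne_top
  filter_upwards [hii A hA hAs] with ω hrate
  set rate := fun n : ℕ =>
    ⨆ θ ∈ A ∩ K, (((n : ℝ)⁻¹ : ℝ) : EReal) * ENNReal.log (g θ n ω / gs n ω)
  set vol := fun n : ℕ => (((n : ℝ)⁻¹ : ℝ) : EReal) * ENNReal.log (lam (A ∩ K))
  calc _ ≤ limsup (rate + vol) atTop := by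
        refine limsup_le_limsup ?_
        -- `n = 0` is excluded: there `n⁻¹ = 0`, while the supremum over an empty `A ∩ K` is `⊥`
        filter_upwards [eventually_ge_atTop 1] with n hn
        exact ENNReal.coe_mul_log_setLIntegral_le (by positivity) lam (A ∩ K) _
    _ ≤ limsup rate atTop + limsup vol atTop :=
        EReal.limsup_add_le (.inr (hvol.trans_lt EReal.zero_lt_top).ne) (.inl hrate.ne_top)
    _ ≤ limsup rate atTop := add_le_of_nonpos_right hvol
    _ < 0 := hrate

/-- Under the setup of the AMLE equivalence (compact `K ∋ θ*`, merging
property, and the equivalent assertion `(ii)` that the likelihood ratio is uniformly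
exponentially small on `A ∩ K` for closed `A ∌ θ*`), if moreover `λ(K) < ∞`, then for every
closed set `A` not containing `θ*` the set `A ∩ K` is `P`-remote:
`limsup_n n⁻¹ log ∫_{A∩K} λ(dθ) g_{θ,n}/g*ₙ < 0` `P`-a.s. -/
theorem amle_implies_premote {Ω Θ : Type*} {mΩ : MeasurableSpace Ω}
    [MetricSpace Θ] [MeasurableSpace Θ] [BorelSpace Θ]
    (P : Measure Ω) [IsProbabilityMeasure P]
    (lam : Measure Θ) [SigmaFinite lam]
    (g : Θ → ℕ → Ω → ℝ≥0∞) (gs : ℕ → Ω → ℝ≥0∞)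
    (hg : ∀ n, Measurable fun p : Θ × Ω => g p.1 n p.2)
    (K : Set Θ) (hK : IsCompact K) (θs : Θ) (hθs : θs ∈ K)
    (hKfin : lam K < ⊤)
    (hmerge : ∀ᵐ ω ∂P, Tendsto (fun n : ℕ =>
      (((n : ℝ)⁻¹ : ℝ) : EReal) * ENNReal.log (g θs n ω / gs n ω)) atTop (nhds 0))
    (hii : ∀ A : Set Θ, IsClosed A → θs ∉ A →
      ∀ᵐ ω ∂P, Filter.atTop.limsup (fun n : ℕ =>
        ⨆ θ ∈ A ∩ K,
          (((n : ℝ)⁻¹ : ℝ) : EReal) * ENNReal.log (g θ n ω / gs n ω)) < 0) :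
    ∀ A : Set Θ, IsClosed A → θs ∉ A →
      ∀ᵐ ω ∂P, Filter.atTop.limsup (fun n : ℕ =>
        (((n : ℝ)⁻¹ : ℝ) : EReal) *
          ENNReal.log (∫⁻ θ in A ∩ K, g θ n ω / gs n ω ∂lam)) < 0 :=
  amle_implies_premote_general (mΩ := mΩ) P lam g gs K θs hKfin hii
end
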